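/- arXiv:1609.07985 — 4 statements merged into one kernel-verified Lean document; each statement's English description precedes it below -/
import Mathlib

section
/- Let f be a rational function of p₁,…,p_n and c = (c₁,…,c_m) a tuple of rational functions. If the gradient ∇f lies in the row span (over the field ℝ(p₁,…,p_n)) of the Jacobian matrix J(c), then f is algebraic over ℝ(c₁,…,c_m). -/
/-!
Suppose `f` is transcendental over `K = ℝ(c)`. In characteristic zero the finitely generated
extension `L = ℝ(p)` is formally smooth over `K[f] ≅ K[X]`, so `df ≠ 0` in `Ω[L⁄K]` and some
`K`-derivation `D` of `L` has `D f ≠ 0`. But `D` kills every `cᵢ`, i.e. `J *ᵥ Dp = 0`, while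
`D f = ∇f ⬝ᵥ Dp`, which vanishes as soon as `∇f` is a combination of the rows of `J`.
-/

theorem KaehlerDifferential.mapBaseChange_injective (R S T : Type*) [CommRing R] [CommRing S]
    [CommRing T] [Algebra R S] [Algebra R T] [Algebra S T] [IsScalarTower R S T]
    [Subsingleton (Algebra.H1Cotangent S T)] :
    Function.Injective (KaehlerDifferential.mapBaseChange R S T) := by
  rw [injective_iff_map_eq_zero]
  intro x hx
  obtain ⟨x, rfl⟩ := (Algebra.H1Cotangent.exact_δ_mapBaseChange R S T x).mp hx
  rw [Subsingleton.elim x 0, map_zero]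

open Polynomial in
theorem KaehlerDifferential.D_ne_zero_of_transcendental {K L : Type*} [Field K] [CharZero K]
    [Field L] [Algebra K L] [Algebra.EssFiniteType K L] {f : L} (hf : Transcendental K f) :
    D K L f ≠ 0 := by
  -- `L` is a `K[X]`-algebra through `X ↦ f`, which factors through `K(X)` as `f` is transcendental.
  let : Algebra K[X] L := (aeval f).toAlgebra
  have : IsScalarTower K K[X] L := .of_algebraMap_eq fun r => (aeval_C f r).symm
  let : Algebra (RatFunc K) L := (RatFunc.liftRingHom (aeval f).toRingHom <|
    nonZeroDivisors_le_comap_nonZeroDivisors_of_injective _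
      (transcendental_iff_injective.mp hf)).toAlgebra
  have : IsScalarTower K[X] (RatFunc K) L :=
    .of_algebraMap_eq fun p => (RatFunc.liftRingHom_algebraMap _ _ p).symm
  have : IsScalarTower K (RatFunc K) L := .of_algebraMap_eq fun r => by
    rw [IsScalarTower.algebraMap_apply K K[X] (RatFunc K),
      ← IsScalarTower.algebraMap_apply K[X] (RatFunc K) L, ← IsScalarTower.algebraMap_apply]
  have : Algebra.EssFiniteType (RatFunc K) L := .of_comp K _ _
  have : Algebra.FormallySmooth K[X] (RatFunc K) := .of_isLocalization (nonZeroDivisors K[X])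
  have : Algebra.FormallySmooth K[X] L := .comp _ (RatFunc K) _
  have hdf : mapBaseChange K K[X] L (1 ⊗ₜ D K K[X] X) = D K L f := by
    rw [mapBaseChange_tmul, one_smul, map_D]
    simp [RingHom.algebraMap_toAlgebra]
  have hdX : (1 : L) ⊗ₜ[K[X]] D K K[X] X ≠ 0 := fun h0 => by
    simpa using congrArg (LinearMap.liftBaseChange L
      ((Algebra.linearMap K[X] L).comp (polynomialEquiv K).toLinearMap)) h0
  rw [← hdf]
  exact (map_ne_zero_iff _ (mapBaseChange_injective K K[X] L)).mpr hdX

theorem isAlgebraic_of_forall_derivation_apply_eq_zero {K L : Type*} [Field K] [CharZero K]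
    [Field L] [Algebra K L] [Algebra.EssFiniteType K L] {f : L}
    (h : ∀ D : Derivation K L L, D f = 0) : IsAlgebraic K f := by
  by_contra hf
  obtain ⟨φ, hφ⟩ : ∃ φ : Module.Dual L Ω[L⁄K], φ (KaehlerDifferential.D K L f) ≠ 0 := by
    by_contra! h'
    exact KaehlerDifferential.D_ne_zero_of_transcendental hf
      ((Module.forall_dual_apply_eq_zero_iff L _).mp h')
  exact hφ (h (φ.compDer (KaehlerDifferential.D K L)))

namespace MvPolynomial

variable {R σ A : Type*} [CommRing R] [Fintype σ]

theorem derivation_algebraMap_eq_sum_pderiv [CommRing A] [Algebra R A]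
    [Algebra (MvPolynomial σ R) A] [IsScalarTower R (MvPolynomial σ R) A]
    (D : Derivation R A A) (u : MvPolynomial σ R) :
    D (algebraMap _ A u) =
      ∑ j, algebraMap _ A (pderiv j u) * D (algebraMap (MvPolynomial σ R) A (X j)) := by
  classical
  have hD : D.compAlgebraMap (MvPolynomial σ R) =
      ∑ j, D (algebraMap _ A (X j : MvPolynomial σ R)) •
        (Algebra.linearMap _ A).compDer (pderiv j) :=
    derivation_ext fun i => by
      simp only [← Derivation.coeFnAddMonoidHom_apply, map_sum, Finset.sum_apply]
      simp [Derivation.coeFnAddMonoidHom_apply, pderiv_X, Pi.single_apply]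
  have hu := congrArg (Derivation.coeFnAddMonoidHom · u) hD
  simp only [map_sum, Finset.sum_apply] at hu
  simpa [Derivation.coeFnAddMonoidHom_apply, mul_comm] using hu

theorem derivation_algebraMap_div_eq_dotProduct [Field A] [Algebra R A]
    [Algebra (MvPolynomial σ R) A] [IsScalarTower R (MvPolynomial σ R) A]
    (D : Derivation R A A) (u v : MvPolynomial σ R) :
    D (algebraMap _ A u / algebraMap _ A v) =
      (fun j => (algebraMap _ A (pderiv j u) * algebraMap _ A v -
          algebraMap _ A u * algebraMap _ A (pderiv j v)) / algebraMap _ A v ^ 2) ⬝ᵥ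
        fun j => D (algebraMap (MvPolynomial σ R) A (X j)) := by
  by_cases hv : algebraMap _ A v = 0
  · simp [hv]
  rw [Derivation.leibniz_div, derivation_algebraMap_eq_sum_pderiv,
    derivation_algebraMap_eq_sum_pderiv, dotProduct, Finset.smul_sum, Finset.smul_sum,
    ← Finset.sum_sub_distrib, Finset.smul_sum]
  refine Finset.sum_congr rfl fun j _ => ?_
  simp only [smul_eq_mul]
  field_simp

end MvPolynomial

open MvPolynomial

theorem gradient_in_rowspan_implies_algebraic_general {n m : ℕ}
    (g h : Fin m → MvPolynomial (Fin n) ℝ)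
    (a b : MvPolynomial (Fin n) ℝ)
    (ι : MvPolynomial (Fin n) ℝ →+* FractionRing (MvPolynomial (Fin n) ℝ))
    (hι : ι = algebraMap (MvPolynomial (Fin n) ℝ) (FractionRing (MvPolynomial (Fin n) ℝ)))
    (J : Matrix (Fin m) (Fin n) (FractionRing (MvPolynomial (Fin n) ℝ)))
    (hJ : ∀ i j, J i j =
      (ι (pderiv j (g i)) * ι (h i) - ι (g i) * ι (pderiv j (h i))) / (ι (h i)) ^ 2)
    (gradf : Fin n → FractionRing (MvPolynomial (Fin n) ℝ))
    (hgrad : ∀ j, gradf j =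
      (ι (pderiv j a) * ι b - ι a * ι (pderiv j b)) / (ι b) ^ 2)
    (hspan : gradf ∈ Submodule.span (FractionRing (MvPolynomial (Fin n) ℝ))
      (Set.range fun i : Fin m => (J i : Fin n → FractionRing (MvPolynomial (Fin n) ℝ)))) :
    IsAlgebraic (IntermediateField.adjoin ℝ (Set.range fun i => ι (g i) / ι (h i)))
      (ι a / ι b) := by
  subst hι
  set ι := algebraMap (MvPolynomial (Fin n) ℝ) (FractionRing (MvPolynomial (Fin n) ℝ))
  set K := IntermediateField.adjoin ℝ (Set.range fun i => ι (g i) / ι (h i))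
  have : Algebra.EssFiniteType K (FractionRing (MvPolynomial (Fin n) ℝ)) := .of_comp ℝ _ _
  refine isAlgebraic_of_forall_derivation_apply_eq_zero fun D => ?_
  set dp := fun j => D (ι (X j))
  have hJdp : Matrix.mulVec J dp = 0 := funext fun i => by
    have hc : ι (g i) / ι (h i) ∈ K := IntermediateField.subset_adjoin ℝ _ ⟨i, rfl⟩
    have hDc := D.map_algebraMap (⟨_, hc⟩ : K)
    rwa [IntermediateField.algebraMap_apply,
      ← D.restrictScalars_apply ℝ, derivation_algebraMap_div_eq_dotProduct,
      ← funext (hJ i)] at hDc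
  obtain ⟨coeffs, hcoeffs⟩ := (Submodule.mem_span_range_iff_exists_fun _).mp hspan
  have hgradf : gradf = Matrix.vecMul coeffs J := by
    rw [← hcoeffs]
    ext j
    simp [Matrix.vecMul, dotProduct, mul_comm]
  calc D (ι a / ι b) = gradf ⬝ᵥ dp := by
        rw [← D.restrictScalars_apply ℝ, derivation_algebraMap_div_eq_dotProduct,
          ← funext hgrad]
        rfl
    _ = coeffs ⬝ᵥ (Matrix.mulVec J dp) := by rw [hgradf, Matrix.dotProduct_mulVec]
    _ = 0 := by rw [hJdp, dotProduct_zero]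

/-- If the gradient `∇f` of a rational function `f = a/b` lies in the row span
(over the function field `ℝ(p₁,…,pₙ)`) of the Jacobian matrix `J(c)` of a tuple
of rational functions `cᵢ = gᵢ/hᵢ`, then `f` is algebraic over `ℝ(c₁,…,c_m)`. -/
theorem gradient_in_rowspan_implies_algebraic {n m : ℕ}
    (g h : Fin m → MvPolynomial (Fin n) ℝ) (hh : ∀ i, h i ≠ 0)
    (a b : MvPolynomial (Fin n) ℝ) (hb : b ≠ 0)
    (ι : MvPolynomial (Fin n) ℝ →+* FractionRing (MvPolynomial (Fin n) ℝ))
    (hι : ι = algebraMap (MvPolynomial (Fin n) ℝ) (FractionRing (MvPolynomial (Fin n) ℝ)))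
    (J : Matrix (Fin m) (Fin n) (FractionRing (MvPolynomial (Fin n) ℝ)))
    (hJ : ∀ i j, J i j =
      (ι (pderiv j (g i)) * ι (h i) - ι (g i) * ι (pderiv j (h i))) / (ι (h i)) ^ 2)
    (gradf : Fin n → FractionRing (MvPolynomial (Fin n) ℝ))
    (hgrad : ∀ j, gradf j =
      (ι (pderiv j a) * ι b - ι a * ι (pderiv j b)) / (ι b) ^ 2)
    (hspan : gradf ∈ Submodule.span (FractionRing (MvPolynomial (Fin n) ℝ))
      (Set.range fun i : Fin m => (J i : Fin n → FractionRing (MvPolynomial (Fin n) ℝ)))) :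
    IsAlgebraic (IntermediateField.adjoin ℝ (Set.range fun i => ι (g i) / ι (h i)))
      (ι a / ι b) :=
  gradient_in_rowspan_implies_algebraic_general g h a b ι hι J hJ gradf hgrad hspan
end

section
/- The ideal P generated in ℚ(p)[x, x', …, x^{(N)}, y, y', …, y^{(N)}, u, u', …, u^{(N-1)}] by the polynomials x^{(k+1)} − d^k/dt^k f(x,p,u) for k = 0,…,N−1 and y^{(k)} − d^k/dt^k g(x,p) for k = 0,…,N (where formal differentiation substitutes the system's equations) is a prime ideal: with a suitable lexicographic order, its initial ideal is the monomial prime ideal ⟨x', …, x^{(N)}, y, …, y^{(N)}⟩. -/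
open MvPolynomial

noncomputable section

/-- Variables of the prolonged system: `x_i^{(k)}` for `i < N`, `k ≤ N`;
`y^{(k)}` for `k ≤ N`; and `u_r^{(k)}` for `r < R`, `k ≤ N-1`. -/
abbrev Vars (N R : ℕ) := (Fin N × Fin (N + 1)) ⊕ (Fin (N + 1) ⊕ (Fin R × Fin N))

/-- The action of formal time-differentiation on the variables: each variable
`v^{(k)}` is sent to `v^{(k+1)}` (and to `0` past the highest order retained). -/
def dvar (F : Type) [CommRing F] (N R : ℕ) : Vars N R → MvPolynomial (Vars N R) F
  | .inl (i, k) =>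
      if hk : (k : ℕ) + 1 ≤ N then X (.inl (i, ⟨(k : ℕ) + 1, by omega⟩)) else 0
  | .inr (.inl k) =>
      if hk : (k : ℕ) + 1 ≤ N then X (.inr (.inl ⟨(k : ℕ) + 1, by omega⟩)) else 0
  | .inr (.inr (r, k)) =>
      if hk : (k : ℕ) + 1 < N then X (.inr (.inr (r, ⟨(k : ℕ) + 1, hk⟩))) else 0

/-- Formal differentiation `d/dt` on the prolonged polynomial ring. -/
def ddt (F : Type) [CommRing F] (N R : ℕ) :
    MvPolynomial (Vars N R) F → MvPolynomial (Vars N R) F :=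
  fun q => MvPolynomial.mkDerivation F (dvar F N R) q

/-- Embedding of a polynomial in the state variables `x` and inputs `u` into the
prolonged ring, sending `x_i ↦ x_i^{(0)}` and `u_r ↦ u_r^{(0)}`. -/
def fEmb (F : Type) [CommRing F] (N R : ℕ) [NeZero N]
    (q : MvPolynomial (Fin N ⊕ Fin R) F) : MvPolynomial (Vars N R) F :=
  aeval (fun w : Fin N ⊕ Fin R => match w with
    | .inl i => X (.inl (i, 0))
    | .inr r => X (.inr (.inr (r, 0)))) q

/-- Embedding of a polynomial in the state variables into the prolonged ring. -/
def gEmb (F : Type) [CommRing F] (N R : ℕ) (q : MvPolynomial (Fin N) F) :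
    MvPolynomial (Vars N R) F :=
  aeval (fun i : Fin N => X (.inl (i, 0))) q

/-- The generators `x_i^{(k+1)} − (d/dt)^k f_i` for `k = 0,…,N−1`. -/
def xGens (F : Type) [CommRing F] (N R : ℕ) [NeZero N]
    (f : Fin N → MvPolynomial (Fin N ⊕ Fin R) F) : Set (MvPolynomial (Vars N R) F) :=
  Set.range fun ik : Fin N × Fin N =>
    X (.inl (ik.1, ik.2.succ)) - (ddt F N R)^[(ik.2 : ℕ)] (fEmb F N R (f ik.1))

/-- The generators `y^{(k)} − (d/dt)^k g` for `k = 0,…,N`. -/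
def yGens (F : Type) [CommRing F] (N R : ℕ) (g : MvPolynomial (Fin N) F) :
    Set (MvPolynomial (Vars N R) F) :=
  Set.range fun k : Fin (N + 1) =>
    X (.inr (.inl k)) - (ddt F N R)^[(k : ℕ)] (gEmb F N R g)

end

/-!
Each generator is `X v - s v`, where `s v` only involves variables of strictly lower order and
`s` fixes the free variables `x^{(0)}`, `u^{(k)}` of order `0`. Iterating the substitution
`aeval s` as many times as the largest order therefore yields an algebra endomorphism `φ` that
kills the generators, while `p - φ p` lies in the ideal for every `p`. So the ideal is `ker φ`,
which is prime because `φ` lands in a polynomial ring over a domain.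
-/

namespace MvPolynomial

variable {σ τ R : Type*} [CommRing R]

theorem X_mem_supported_of_mem {s : Set σ} {i : σ} (hi : i ∈ s) :
    (X i : MvPolynomial σ R) ∈ supported R s :=
  Algebra.subset_adjoin (Set.mem_image_of_mem X hi)

theorem exists_rename_eq_of_mem_supported {S : Set σ} {p : MvPolynomial σ R}
    (hp : p ∈ supported R S) : ∃ q : MvPolynomial S R, rename (↑) q = p :=
  (AlgHom.mem_range _).mp (supported_eq_range_rename (R := R) S ▸ hp)

theorem aeval_mem_supported {S : Set σ} {T : Set τ} {s : σ → MvPolynomial τ R}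
    (hs : ∀ v ∈ S, s v ∈ supported R T) {p : MvPolynomial σ R} (hp : p ∈ supported R S) :
    aeval s p ∈ supported R T := by
  obtain ⟨q, rfl⟩ := exists_rename_eq_of_mem_supported hp
  rw [aeval_rename]
  refine Algebra.adjoin_le ?_
    (aeval_range (R := R) (s ∘ ((↑) : S → σ)) ▸ AlgHom.mem_range_self _ q)
  rintro _ ⟨v, rfl⟩
  exact hs v v.2

theorem aeval_eq_self_of_mem_supported {S : Set σ} {s : σ → MvPolynomial σ R}
    (hs : ∀ v ∈ S, s v = X v) {p : MvPolynomial σ R} (hp : p ∈ supported R S) :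
    aeval s p = p := by
  obtain ⟨q, rfl⟩ := exists_rename_eq_of_mem_supported hp
  rw [aeval_rename, rename_eq_aeval]
  exact congrArg (fun t : S → MvPolynomial σ R => aeval t q) (_root_.funext fun v => hs v v.2)

theorem derivation_mem_supported {S T : Set σ} (hST : S ⊆ T)
    (D : Derivation R (MvPolynomial σ R) (MvPolynomial σ R))
    (hD : ∀ v ∈ S, D (X v) ∈ supported R T) {p : MvPolynomial σ R}
    (hp : p ∈ supported R S) : D p ∈ supported R T := by
  induction hp using Algebra.adjoin_induction with
  | mem x hx =>
    obtain ⟨v, hv, rfl⟩ := hx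
    exact hD v hv
  | algebraMap r => simp
  | add x y _ _ hx hy => simpa using add_mem hx hy
  | mul x y hx' hy' hx hy =>
    rw [Derivation.leibniz, smul_eq_mul, smul_eq_mul]
    exact add_mem (mul_mem (supported_mono hST hx') hy) (mul_mem (supported_mono hST hy') hx)

theorem sub_aeval_mem {s : σ → MvPolynomial σ R} {J : Ideal (MvPolynomial σ R)}
    (hJ : ∀ v, X v - s v ∈ J) (p : MvPolynomial σ R) : p - aeval s p ∈ J := by
  have h : (Ideal.Quotient.mkₐ R J).comp (aeval s) = Ideal.Quotient.mkₐ R J :=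
    algHom_ext fun v => by simpa [Ideal.Quotient.eq] using sub_mem_comm_iff.mp (hJ v)
  exact Ideal.Quotient.eq.mp (DFunLike.congr_fun h p).symm

theorem sub_iterate_aeval_mem {s : σ → MvPolynomial σ R} {J : Ideal (MvPolynomial σ R)}
    (hJ : ∀ v, X v - s v ∈ J) (n : ℕ) (p : MvPolynomial σ R) :
    p - (aeval s)^[n] p ∈ J := by
  induction n generalizing p with
  | zero => simp
  | succ n ih =>
    rw [Function.iterate_succ_apply, ← sub_add_sub_cancel p (aeval s p)]
    exact add_mem (sub_aeval_mem hJ p) (ih _)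

section Triangular

structure IsTriangular (ord : σ → ℕ) (s : σ → MvPolynomial σ R) : Prop where
  mem_supported : ∀ v, 0 < ord v → s v ∈ supported R {w | ord w < ord v}
  eq_X : ∀ v, ord v = 0 → s v = X v

variable {ord : σ → ℕ} {s : σ → MvPolynomial σ R}

theorem IsTriangular.aeval_mem_supported (hs : IsTriangular ord s) {m : ℕ}
    {p : MvPolynomial σ R} (hp : p ∈ supported R {w | ord w ≤ m + 1}) :
    aeval s p ∈ supported R {w | ord w ≤ m} := by
  refine MvPolynomial.aeval_mem_supported (fun v (hv : ord v ≤ m + 1) => ?_) hp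
  rcases Nat.eq_zero_or_pos (ord v) with h | h
  · exact hs.eq_X v h ▸ X_mem_supported_of_mem (show ord v ≤ m by omega)
  · exact supported_mono (fun w (hw : ord w < ord v) => show ord w ≤ m by omega)
      (hs.mem_supported v h)

theorem IsTriangular.isFixedPt_iterate_aeval (hs : IsTriangular ord s) {m n : ℕ} (hmn : m ≤ n)
    {p : MvPolynomial σ R} (hp : p ∈ supported R {w | ord w ≤ m}) :
    Function.IsFixedPt (aeval s) ((aeval s)^[n] p) := by
  induction m generalizing n p with
  | zero =>
    have hfix : aeval s p = p :=
      aeval_eq_self_of_mem_supported (fun v (hv : ord v ≤ 0) => hs.eq_X v (Nat.le_zero.mp hv)) hp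
    rw [Function.IsFixedPt, Function.iterate_fixed hfix, hfix]
  | succ m ih =>
    obtain ⟨n, rfl⟩ : ∃ k, n = k + 1 := ⟨n - 1, by omega⟩
    rw [Function.iterate_succ_apply]
    exact ih (by omega) (hs.aeval_mem_supported hp)

theorem IsTriangular.span_X_sub_eq_ker_pow (hs : IsTriangular ord s) {n : ℕ}
    (hn : ∀ v, ord v ≤ n) :
    Ideal.span (Set.range fun v => X v - s v) = RingHom.ker (aeval s ^ n) := by
  apply le_antisymm
  · refine Ideal.span_le.mpr ?_
    rintro _ ⟨v, rfl⟩
    have hX : (X v : MvPolynomial σ R) ∈ supported R {w | ord w ≤ n} :=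
      X_mem_supported_of_mem (hn v)
    simp only [SetLike.mem_coe, RingHom.mem_ker, map_sub, AlgHom.coe_pow, sub_eq_zero]
    rw [← (hs.isFixedPt_iterate_aeval le_rfl hX).eq, ← Function.iterate_succ_apply' (aeval s),
      Function.iterate_succ_apply, aeval_X]
  · intro p hp
    have := sub_iterate_aeval_mem (J := Ideal.span (Set.range fun v => X v - s v))
      (fun v => Ideal.subset_span ⟨v, rfl⟩) n p
    rwa [← AlgHom.coe_pow, RingHom.mem_ker.mp hp, sub_zero] at this

theorem IsTriangular.isPrime_span_X_sub [IsDomain R] [Finite σ] (hs : IsTriangular ord s) :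
    (Ideal.span (Set.range fun v => X v - s v)).IsPrime := by
  obtain ⟨n, hn⟩ := (Set.finite_range ord).bddAbove
  rw [hs.span_X_sub_eq_ker_pow (n := n) fun v => hn (Set.mem_range_self v)]
  exact RingHom.ker_isPrime _

end Triangular

end MvPolynomial

namespace Prolongation

open MvPolynomial

variable (F : Type) [CommRing F] (N R : ℕ)

/-- `y^{(k)}` is solved in terms of `x^{(≤ k)}`, so it sits one order above `x^{(k)}`. -/
def varOrder : Vars N R → ℕ
  | .inl (_, k) => k
  | .inr (.inl k) => k + 1
  | .inr (.inr _) => 0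

theorem ddt_mem_supported {m : ℕ} {p : MvPolynomial (Vars N R) F}
    (hp : p ∈ supported F {w | varOrder N R w ≤ m}) :
    ddt F N R p ∈ supported F {w | varOrder N R w ≤ m + 1} := by
  refine derivation_mem_supported (fun w (hw : _ ≤ m) => show _ ≤ m + 1 by omega)
    (mkDerivation F (dvar F N R)) (fun v (hv : varOrder N R v ≤ m) => ?_) hp
  rw [mkDerivation_X]
  rcases v with ⟨i, k⟩ | k | ⟨r, k⟩ <;> simp only [dvar] <;> split <;>
    first
    | exact zero_mem _
    | exact X_mem_supported_of_mem
        (show varOrder N R _ ≤ m + 1 by simp only [varOrder] at hv ⊢; omega)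

theorem iterate_ddt_mem_supported {m : ℕ} (k : ℕ) {p : MvPolynomial (Vars N R) F}
    (hp : p ∈ supported F {w | varOrder N R w ≤ m}) :
    (ddt F N R)^[k] p ∈ supported F {w | varOrder N R w ≤ m + k} := by
  induction k with
  | zero => exact hp
  | succ k ih =>
    exact Function.iterate_succ_apply' (ddt F N R) k p ▸ ddt_mem_supported F N R ih

theorem fEmb_mem_supported [NeZero N] (p : MvPolynomial (Fin N ⊕ Fin R) F) :
    fEmb F N R p ∈ supported F {w | varOrder N R w ≤ 0} := by
  refine aeval_mem_supported (R := F) (S := Set.univ) (fun v _ => ?_) (by simp)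
  rcases v with i | r <;> exact X_mem_supported_of_mem (by simp [varOrder])

theorem gEmb_mem_supported (p : MvPolynomial (Fin N) F) :
    gEmb F N R p ∈ supported F {w | varOrder N R w ≤ 0} :=
  aeval_mem_supported (R := F) (S := Set.univ)
    (fun _ _ => X_mem_supported_of_mem (by simp [varOrder])) (by simp)

variable [NeZero N] (f : Fin N → MvPolynomial (Fin N ⊕ Fin R) F) (g : MvPolynomial (Fin N) F)

/-- `rhs v` is chosen so that `X v - rhs v` is the generator with leading variable `v`, or `0` for
the free variables `x^{(0)}` and `u^{(k)}`. -/
noncomputable def rhs : Vars N R → MvPolynomial (Vars N R) F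
  | .inl (i, k) => Fin.cases (X (.inl (i, 0))) (fun j => (ddt F N R)^[j] (fEmb F N R (f i))) k
  | .inr (.inl k) => (ddt F N R)^[k] (gEmb F N R g)
  | .inr (.inr rk) => X (.inr (.inr rk))

theorem rhs_mem_supported (v : Vars N R) (hv : 0 < varOrder N R v) :
    rhs F N R f g v ∈ supported F {w | varOrder N R w < varOrder N R v} := by
  rcases v with ⟨i, k⟩ | k | ⟨r, k⟩
  · induction k using Fin.cases with
    | zero => simp [varOrder] at hv
    | succ j =>
      refine supported_mono (fun w hw => ?_)
        (iterate_ddt_mem_supported F N R j (fEmb_mem_supported F N R (f i)))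
      simp only [varOrder, Set.mem_ofPred_eq, Fin.val_succ] at hw ⊢
      omega
  · refine supported_mono (fun w hw => ?_)
      (iterate_ddt_mem_supported F N R k (gEmb_mem_supported F N R g))
    simp only [varOrder, Set.mem_ofPred_eq] at hw ⊢
    omega
  · simp [varOrder] at hv

theorem rhs_eq_X (v : Vars N R) (hv : varOrder N R v = 0) : rhs F N R f g v = X v := by
  rcases v with ⟨i, k⟩ | k | ⟨r, k⟩
  · obtain rfl : k = 0 := Fin.ext hv
    rfl
  · simp [varOrder] at hv
  · rfl

theorem span_xGens_union_yGens :
    Ideal.span (xGens F N R f ∪ yGens F N R g) =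
      Ideal.span (Set.range fun v => X v - rhs F N R f g v) := by
  apply le_antisymm <;> refine Ideal.span_le.mpr ?_
  · rintro _ (⟨⟨i, j⟩, rfl⟩ | ⟨k, rfl⟩)
    · exact Ideal.subset_span ⟨.inl (i, j.succ), by simp [rhs]⟩
    · exact Ideal.subset_span ⟨.inr (.inl k), rfl⟩
  · rintro _ ⟨⟨i, k⟩ | k | ⟨r, k⟩, rfl⟩
    · induction k using Fin.cases with
      | zero => simp [rhs]
      | succ j => exact Ideal.subset_span (.inl ⟨(i, j), by simp [rhs]⟩)
    · exact Ideal.subset_span (.inr ⟨k, rfl⟩)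
    · simp [rhs]

end Prolongation

/-- The ideal `P` generated in `ℚ(p)[x,…,x^{(N)},y,…,y^{(N)},u,…,u^{(N-1)}]` by
`x^{(k+1)} − (d/dt)^k f` for `k = 0,…,N−1` and `y^{(k)} − (d/dt)^k g` for
`k = 0,…,N` is prime (with a suitable lexicographic order its initial ideal is
the monomial prime `⟨x',…,x^{(N)},y,…,y^{(N)}⟩`). -/
theorem prolongation_ideal_isPrime (q N R : ℕ) [NeZero N]
    (f : Fin N → MvPolynomial (Fin N ⊕ Fin R) (FractionRing (MvPolynomial (Fin q) ℚ)))
    (g : MvPolynomial (Fin N) (FractionRing (MvPolynomial (Fin q) ℚ))) :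
    (Ideal.span
      (xGens (FractionRing (MvPolynomial (Fin q) ℚ)) N R f ∪
        yGens (FractionRing (MvPolynomial (Fin q) ℚ)) N R g)).IsPrime := by
  rw [Prolongation.span_xGens_union_yGens]
  exact MvPolynomial.IsTriangular.isPrime_span_X_sub (ord := Prolongation.varOrder N R)
    ⟨Prolongation.rhs_mem_supported _ N R f g, Prolongation.rhs_eq_X _ N R f g⟩
end

section
/- For the two 3-compartment models with coefficient maps c(a₀₁,a₂₁,a₃₂) = (a₃₂+a₀₁+a₂₁, a₀₁a₃₂+a₂₁a₃₂, a₂₁a₃₂, a₃₂, a₀₁a₃₂+a₂₁a₃₂) and c'(b₀₂,b₂₁,b₃₂) = (b₂₁+b₀₂+b₃₂, b₂₁b₀₂+b₂₁b₃₂, b₂₁b₃₂, b₃₂, b₃₂b₂₁), the vanishing ideal of the image of c in ℚ[c₁,…,c₅] contains c₂ − c₅ and c₁c₄ − c₄² − c₅, while c₂ − c₅ does not vanish on the image of c' (e.g., at b₀₂ = b₂₁ = b₃₂ = 1, c₂' = 2 ≠ 1 = c₅'). Hence the two models are generically distinguishable. -/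
/-- Coefficient map of the first 3-compartment model. -/
noncomputable def cMap (a01 a21 a32 : ℝ) : Fin 5 → ℝ :=
  ![a32 + a01 + a21, a01 * a32 + a21 * a32, a21 * a32, a32, a01 * a32 + a21 * a32]

/-- Coefficient map of the second 3-compartment model. -/
noncomputable def cMap' (b02 b21 b32 : ℝ) : Fin 5 → ℝ :=
  ![b21 + b02 + b32, b21 * b02 + b21 * b32, b21 * b32, b32, b32 * b21]

theorem Set.range_ne_of_forall_of_not {α β γ : Type*} {f : α → γ} {g : β → γ} (P : γ → Prop)
    (hf : ∀ a, P (f a)) (b : β) (hb : ¬ P (g b)) : Set.range f ≠ Set.range g := by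
  intro h
  obtain ⟨a, ha⟩ : g b ∈ Set.range f := h ▸ Set.mem_range_self b
  exact hb (ha ▸ hf a)

theorem cMap_one_sub_cMap_four (a01 a21 a32 : ℝ) :
    cMap a01 a21 a32 1 - cMap a01 a21 a32 4 = 0 := by
  simp [cMap]

theorem cMap_zero_mul_three_sub_sq_three_sub_four (a01 a21 a32 : ℝ) :
    cMap a01 a21 a32 0 * cMap a01 a21 a32 3 - (cMap a01 a21 a32 3) ^ 2 -
      cMap a01 a21 a32 4 = 0 := by
  simp only [cMap, Matrix.cons_val]
  ring

theorem cMap'_one_one_one_one : cMap' 1 1 1 1 = 2 := by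
  norm_num [cMap']

theorem cMap'_one_one_one_four : cMap' 1 1 1 4 = 1 := by
  simp only [cMap', Matrix.cons_val]
  norm_num

/-- The relations `c₂ − c₅` and `c₁c₄ − c₄² − c₅` vanish identically on the
image of `c`, while `c₂ − c₅` fails to vanish at `c'(1,1,1)` (where `c₂' = 2`
and `c₅' = 1`); hence the images of the two coefficient maps differ and the
two models are generically distinguishable. -/
theorem threeCompartment_distinguishable :
    (∀ a01 a21 a32 : ℝ,
      cMap a01 a21 a32 1 - cMap a01 a21 a32 4 = 0 ∧
      cMap a01 a21 a32 0 * cMap a01 a21 a32 3 - (cMap a01 a21 a32 3) ^ 2 -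
        cMap a01 a21 a32 4 = 0) ∧
    (cMap' 1 1 1 1 = 2 ∧ cMap' 1 1 1 4 = 1) ∧
    Set.range (fun t : ℝ × ℝ × ℝ => cMap t.1 t.2.1 t.2.2) ≠
      Set.range (fun t : ℝ × ℝ × ℝ => cMap' t.1 t.2.1 t.2.2) := by
  refine ⟨fun a01 a21 a32 => ⟨cMap_one_sub_cMap_four a01 a21 a32,
      cMap_zero_mul_three_sub_sq_three_sub_four a01 a21 a32⟩,
    ⟨cMap'_one_one_one_one, cMap'_one_one_one_four⟩, ?_⟩
  refine Set.range_ne_of_forall_of_not (fun c => c 1 - c 4 = 0)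
    (fun t => cMap_one_sub_cMap_four t.1 t.2.1 t.2.2) (1, 1, 1) ?_
  simp only [cMap'_one_one_one_one, cMap'_one_one_one_four]
  norm_num
end

section
/- For the two coefficient maps c(a₀₁,a₂₁,a₃₂) = (a₃₂+a₀₁+a₂₁, a₀₁a₃₂+a₂₁a₃₂, a₂₁a₃₂) and c'(b₀₂,b₂₁,b₃₂) = (b₂₁+b₀₂+b₃₂, b₂₁b₀₂+b₂₁b₃₂, b₂₁b₃₂) restricted to the positive octant, the images coincide: for every (b₀₂,b₂₁,b₃₂) with all coordinates positive, the point (a₀₁,a₂₁,a₃₂) = (b₀₂b₂₁/(b₀₂+b₃₂), b₂₁b₃₂/(b₀₂+b₃₂), b₀₂+b₃₂) has positive coordinates and satisfies c(a) = c'(b), and symmetrically (b₀₂,b₂₁,b₃₂) = (a₀₁a₃₂/(a₀₁+a₂₁), a₀₁+a₂₁, a₂₁a₃₂/(a₀₁+a₂₁)) works in the other direction. -/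
/-!
Both coefficient maps have the shape `(s + p, p * s, q * s)`: for `c` take `s = a₃₂`,
`p = a₀₁ + a₂₁`, `q = a₂₁`; for `c'` take `s = b₂₁`, `p = b₀₂ + b₃₂`, `q = b₃₂`. The explicit
substitutions exchange `s` and `p` and replace `q` by `q * s / p`, which leaves all three
coefficients unchanged and keeps every rate positive.
-/

section

variable {K : Type*} [Field K]

def coeffMap (a01 a21 a32 : K) : K × K × K :=
  (a32 + a01 + a21, a01 * a32 + a21 * a32, a21 * a32)

def coeffMap' (b02 b21 b32 : K) : K × K × K :=
  (b21 + b02 + b32, b21 * b02 + b21 * b32, b21 * b32)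

theorem mul_div_add_mul_div_add_eq {x z : K} (y : K) (h : x + z ≠ 0) :
    x * y / (x + z) + z * y / (x + z) = y := by
  rw [← add_div, ← add_mul, mul_div_cancel_left₀ y h]

theorem coeffMap_eq_coeffMap' {b02 b32 : K} (b21 : K) (h : b02 + b32 ≠ 0) :
    coeffMap (b02 * b21 / (b02 + b32)) (b21 * b32 / (b02 + b32)) (b02 + b32) =
      coeffMap' b02 b21 b32 := by
  have hsum : b02 * b21 / (b02 + b32) + b21 * b32 / (b02 + b32) = b21 := by
    rw [mul_comm b21 b32]
    exact mul_div_add_mul_div_add_eq b21 h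
  rw [coeffMap, coeffMap', add_assoc (b02 + b32), hsum, div_mul_cancel₀ _ h,
    div_mul_cancel₀ _ h, Prod.mk.injEq, Prod.mk.injEq]
  exact ⟨by ring, by ring, rfl⟩

theorem coeffMap'_eq_coeffMap {a01 a21 : K} (a32 : K) (h : a01 + a21 ≠ 0) :
    coeffMap' (a01 * a32 / (a01 + a21)) (a01 + a21) (a21 * a32 / (a01 + a21)) =
      coeffMap a01 a21 a32 := by
  have hsum := mul_div_add_mul_div_add_eq a32 h
  rw [coeffMap, coeffMap', add_assoc (a01 + a21), hsum, mul_div_cancel₀ _ h,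
    mul_div_cancel₀ _ h, Prod.mk.injEq, Prod.mk.injEq]
  exact ⟨by ring, rfl, rfl⟩

end

/-- Indistinguishability of the two 3-compartment models over the positive
octant: the images of the coefficient maps
`c(a₀₁,a₂₁,a₃₂) = (a₃₂+a₀₁+a₂₁, a₀₁a₃₂+a₂₁a₃₂, a₂₁a₃₂)` and
`c'(b₀₂,b₂₁,b₃₂) = (b₂₁+b₀₂+b₃₂, b₂₁b₀₂+b₂₁b₃₂, b₂₁b₃₂)` coincide, via the
explicit mutually inverse substitutions. -/
theorem threeCompartment_indistinguishable :
    (∀ b02 b21 b32 : ℝ, 0 < b02 → 0 < b21 → 0 < b32 →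
      0 < b02 * b21 / (b02 + b32) ∧ 0 < b21 * b32 / (b02 + b32) ∧ 0 < b02 + b32 ∧
      (b02 + b32) + b02 * b21 / (b02 + b32) + b21 * b32 / (b02 + b32)
          = b21 + b02 + b32 ∧
      (b02 * b21 / (b02 + b32)) * (b02 + b32) +
          (b21 * b32 / (b02 + b32)) * (b02 + b32) = b21 * b02 + b21 * b32 ∧
      (b21 * b32 / (b02 + b32)) * (b02 + b32) = b21 * b32) ∧
    (∀ a01 a21 a32 : ℝ, 0 < a01 → 0 < a21 → 0 < a32 →
      0 < a01 * a32 / (a01 + a21) ∧ 0 < a01 + a21 ∧ 0 < a21 * a32 / (a01 + a21) ∧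
      (a01 + a21) + a01 * a32 / (a01 + a21) + a21 * a32 / (a01 + a21)
          = a32 + a01 + a21 ∧
      (a01 + a21) * (a01 * a32 / (a01 + a21)) +
          (a01 + a21) * (a21 * a32 / (a01 + a21)) = a01 * a32 + a21 * a32 ∧
      (a01 + a21) * (a21 * a32 / (a01 + a21)) = a21 * a32) := by
  constructor
  · intro b02 b21 b32 h02 h21 h32
    have hc := coeffMap_eq_coeffMap' b21 (by positivity : b02 + b32 ≠ 0)
    simp only [coeffMap, coeffMap', Prod.mk.injEq] at hc
    exact ⟨by positivity, by positivity, by positivity, hc⟩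
  · intro a01 a21 a32 h01 h21 h32
    have hc := coeffMap'_eq_coeffMap a32 (by positivity : a01 + a21 ≠ 0)
    simp only [coeffMap, coeffMap', Prod.mk.injEq] at hc
    exact ⟨by positivity, by positivity, by positivity, hc⟩
end
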